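/- For a noetherian commutative ring with a dualizing complex, Hom(I, J) is a bounded complex of flat modules whenever I is a bounded complex of injectives and J is an injective module. -/

import Mathlib

open CategoryTheory CategoryTheory.Limits CochainComplex.HomComplex

variable {A : Type} [CommRing A]

/-- Cochain complexes of A-modules. -/
abbrev Cplx (A : Type) [Ring A] := CochainComplex (ModuleCat A) ℤ

/-- A complex is acyclic (exact) if it is exact at every degree. -/
def Acyclic (C : Cplx A) : Prop := ∀ n : ℤ, C.ExactAt n

/-- A module viewed as a complex concentrated in degree 0. -/
noncomputable def sgl (Q : ModuleCat A) : Cplx A :=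
  (HomologicalComplex.single (ModuleCat A) (ComplexShape.up ℤ) 0).obj Q

/-- Acyclicity of the total Hom-complex Hom(P, Q): every n-cocycle is a coboundary. -/
def HomAcyclic (P Q : Cplx A) : Prop :=
  ∀ (n : ℤ) (z : Cocycle P Q n), ∃ y : Cochain P Q (n - 1), δ (n - 1) n y = z.1

/-- A complex is bounded if its terms vanish outside a finite range. -/
def Bdd (C : Cplx A) : Prop := ∃ a b : ℤ, ∀ n : ℤ, (n < a ∨ b < n) → IsZero (C.X n)

/-- A Gorenstein projective module: a kernel Ker(E^1 → E^2) of a totally acyclic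
complex of projectives. -/
def IsGorensteinProjective (G : ModuleCat A) : Prop :=
  ∃ E : Cplx A, (∀ n : ℤ, Projective (E.X n)) ∧ Acyclic E ∧
    (∀ Q : ModuleCat A, Projective Q → HomAcyclic E (sgl Q)) ∧
    Nonempty (G ≅ kernel (E.d 1 2))

/-!
The evaluation map `Hom(M, J) ⊗ N → Hom(Hom(N, M), J)`, `f ⊗ n ↦ (g ↦ f (g n))`, is an
isomorphism for finite free `N`. When `J` is injective, `N ↦ Hom(Hom(N, M), J)` is right exact
like `N ↦ Hom(M, J) ⊗ N`, so the four lemma applied to a finite presentation of `N` makes the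
map injective for every finitely presented `N`. Over a noetherian ring every ideal `𝔞` is
finitely presented, and when `M` is injective as well `Hom(Hom(-, M), J)` carries `𝔞 ⊆ R` to an
injection; comparing through the evaluation maps, `Hom(M, J) ⊗ 𝔞 → Hom(M, J)` is injective,
which is flatness.
-/

namespace HomInjectiveFlat

open TensorProduct LinearMap

universe u v w

section Injective

variable {R : Type u} [CommRing R] {X Y Z : Type*} [AddCommGroup X] [Module R X]
  [AddCommGroup Y] [Module R Y] [AddCommGroup Z] [Module R Z]
  (Q : Type v) [AddCommGroup Q] [Module R Q] [Module.Injective R Q] [Small.{v} R]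

theorem lcomp_surjective_of_injective {f : X →ₗ[R] Y} (hf : Function.Injective f) :
    Function.Surjective (lcomp R Q f) :=
  Module.Injective.extension_property R Q X Y f hf

theorem exact_lcomp_of_exact {f : X →ₗ[R] Y} {g : Y →ₗ[R] Z} (exac : Function.Exact f g) :
    Function.Exact (lcomp R Q g) (lcomp R Q f) := by
  intro φ
  refine ⟨fun hφ ↦ ?_, fun ⟨ψ, hψ⟩ ↦ ?_⟩
  · have exac' : Function.Exact f g.rangeRestrict :=
      (Submodule.injective_subtype (range g)).comp_exact_iff_exact.mp exac
    obtain ⟨φ', rfl⟩ :=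
      (exact_lcomp_of_exact_of_surjective Q exac' g.surjective_rangeRestrict φ).mp hφ
    obtain ⟨ψ, rfl⟩ :=
      lcomp_surjective_of_injective Q (Submodule.injective_subtype (range g)) φ'
    exact ⟨ψ, rfl⟩
  · rw [← hψ]
    exact (congrArg ψ.comp exac.linearMap_comp_eq_zero).trans ψ.comp_zero

end Injective

variable (R : Type u) [CommRing R] (M : Type v) (J : Type w) (N : Type*)
  [AddCommGroup M] [Module R M] [AddCommGroup J] [Module R J] [AddCommGroup N] [Module R N]

noncomputable def homTensorToHomHom :
    (M →ₗ[R] J) ⊗[R] N →ₗ[R] ((N →ₗ[R] M) →ₗ[R] J) :=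
  TensorProduct.lift ((llcomp R (N →ₗ[R] M) M J).compl₂ applyₗ)

variable {R M J N}

@[simp]
theorem homTensorToHomHom_tmul (f : M →ₗ[R] J) (n : N) (g : N →ₗ[R] M) :
    homTensorToHomHom R M J N (f ⊗ₜ n) g = f (g n) :=
  rfl

theorem homTensorToHomHom_comp_lTensor {N' : Type*} [AddCommGroup N'] [Module R N']
    (ψ : N →ₗ[R] N') :
    homTensorToHomHom R M J N' ∘ₗ ψ.lTensor _ =
      lcomp R J (lcomp R M ψ) ∘ₗ homTensorToHomHom R M J N := by
  ext f n g
  rfl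

theorem homTensorToHomHom_pi_bijective (ι : Type*) [Fintype ι] [DecidableEq ι] :
    Function.Bijective (homTensorToHomHom R M J (ι → R)) := by
  let e := lsum R (fun _ : ι ↦ M) R ≪≫ₗ
    (LinearEquiv.piRing R M ι R).symm.arrowCongr (.refl R J)
  suffices homTensorToHomHom R M J (ι → R) =
      e.toLinearMap ∘ₗ (piScalarRight R R (M →ₗ[R] J) ι).toLinearMap by
    rw [this]
    exact e.bijective.comp (piScalarRight R R (M →ₗ[R] J) ι).bijective
  ext f i g
  conv_lhs => rw [← (LinearEquiv.piRing R M ι R).symm_apply_apply g]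
  simp [e]

theorem homTensorToHomHom_injective [Module.Injective R J] [Small.{w} R]
    [Module.FinitePresentation R N] : Function.Injective (homTensorToHomHom R M J N) := by
  obtain ⟨n, m, π, φ, hπ, exac⟩ := Module.FinitePresentation.exists_fin' R N
  exact injective_of_surjective_of_injective_of_right_exact
    (φ.lTensor _) (π.lTensor _) (lcomp R J (lcomp R M φ)) (lcomp R J (lcomp R M π))
    _ _ _ (homTensorToHomHom_comp_lTensor φ).symm (homTensorToHomHom_comp_lTensor π).symm
    (lTensor_exact _ exac hπ)
    (exact_lcomp_of_exact J (exact_lcomp_of_exact_of_surjective M exac hπ))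
    (homTensorToHomHom_pi_bijective (Fin m)).2 (homTensorToHomHom_pi_bijective (Fin n)).1
    (lTensor_surjective _ hπ)

variable (R M J)

theorem flat_linearMap_of_injective [IsNoetherianRing R] [Module.Injective R M]
    [Module.Injective R J] [Small.{v} R] [Small.{w} R] : Module.Flat R (M →ₗ[R] J) := by
  refine Module.Flat.iff_lTensor_injective'.mpr fun 𝔞 ↦ ?_
  have := Module.finitePresentation_of_finite R 𝔞
  have hinj :
      Function.Injective (lcomp R J (lcomp R M 𝔞.subtype) ∘ₗ homTensorToHomHom R M J 𝔞) :=
    (lcomp_injective_of_surjective _ (lcomp_surjective_of_injective M 𝔞.injective_subtype)).comp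
      homTensorToHomHom_injective
  rw [← homTensorToHomHom_comp_lTensor, coe_comp] at hinj
  exact hinj.of_comp

end HomInjectiveFlat

/-- Over a commutative noetherian ring, Hom(I, J) is a bounded complex of flat modules
whenever I is a bounded complex of injectives and J is an injective module. -/
theorem stmt_4 [IsNoetherianRing A] (I : Cplx A) (hI : ∀ n : ℤ, Injective (I.X n))
    (hIb : Bdd I) (J : Type) [AddCommGroup J] [Module A J] (hJ : Module.Injective A J) :
    (∀ n : ℤ, Module.Flat A (I.X n →ₗ[A] J)) ∧
    (∃ a b : ℤ, ∀ n : ℤ, (n < a ∨ b < n) → Subsingleton (I.X n →ₗ[A] J)) := by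
  refine ⟨fun n ↦ ?_, ?_⟩
  · have := Module.injective_module_of_injective_object A (I.X n) (inj := hI n)
    exact HomInjectiveFlat.flat_linearMap_of_injective A (I.X n) J
  · obtain ⟨a, b, hab⟩ := hIb
    refine ⟨a, b, fun n hn ↦ ?_⟩
    have := ModuleCat.isZero_iff_subsingleton.mp (hab n hn)
    infer_instance
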